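/- Let n ≥ 1 and k, l ≥ 0 be integers, and suppose either that n > l + k, or that n is odd and l + k is even. Then a linear map φ : (ℝⁿ)^{⊗k} → (ℝⁿ)^{⊗l} is SO(n)-equivariant if and only if it is O(n)-equivariant; that is, Hom_{SO(n)}((ℝⁿ)^{⊗k},(ℝⁿ)^{⊗l}) = Hom_{O(n)}((ℝⁿ)^{⊗k},(ℝⁿ)^{⊗l}). -/

import Mathlib

open Matrix

noncomputable section

/-- The matrix of `g^{⊗k}` in the standard basis of `(ℝⁿ)^{⊗k}`. -/
def tpowM {n : ℕ} (k : ℕ) (g : Matrix (Fin n) (Fin n) ℝ) :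
    Matrix (Fin k → Fin n) (Fin k → Fin n) ℝ :=
  Matrix.of fun I J => ∏ r, g (I r) (J r)

/-- Equivariance for the set of matrices satisfying `P`. -/
def IsGEquiv {n : ℕ} (k l : ℕ) (P : Matrix (Fin n) (Fin n) ℝ → Prop)
    (φ : ((Fin k → Fin n) → ℝ) →ₗ[ℝ] ((Fin l → Fin n) → ℝ)) : Prop :=
  ∀ g : Matrix (Fin n) (Fin n) ℝ, P g →
    φ ∘ₗ (tpowM k g).mulVecLin = (tpowM l g).mulVecLin ∘ₗ φ

/-!
Since `O(n) = SO(n) ∪ r · SO(n)` for any orthogonal `r` with `det r = -1`, an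
`SO(n)`-equivariant map is `O(n)`-equivariant as soon as it commutes with one such `r`.
If `n` is odd take `r = -1`, which acts on `(ℝⁿ)^{⊗k}` by `(-1)^k`; this is the same scalar on
both sides when `l + k` is even. If `l + k < n` take the reflection `rₘ` in a coordinate
hyperplane: `rₘ` acts diagonally in the standard basis, so it suffices to compare its signs on
the basis vectors `e_I`, `e_J` of an entry of the matrix of `φ`. Some coordinate `p` occurs in
neither `I` nor `J`, and `rₘ rₚ ∈ SO(n)` has the same signs as `rₘ` there.
-/

section TensorPower

variable {n : ℕ} (k : ℕ)

lemma tpowM_mul (A B : Matrix (Fin n) (Fin n) ℝ) :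
    tpowM k (A * B) = tpowM k A * tpowM k B := by
  ext I J
  simp only [tpowM, of_apply, Matrix.mul_apply, Fintype.prod_sum]
  exact Finset.sum_congr rfl fun K _ => Finset.prod_mul_distrib

lemma tpowM_diagonal (d : Fin n → ℝ) :
    tpowM k (diagonal d) = diagonal fun J => ∏ r, d (J r) := by
  ext I J
  by_cases hIJ : I = J
  · subst hIJ
    simp [tpowM]
  · obtain ⟨r, hr⟩ := Function.ne_iff.mp hIJ
    rw [diagonal_apply_ne _ hIJ]
    exact Finset.prod_eq_zero (Finset.mem_univ r) (diagonal_apply_ne _ hr)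

lemma tpowM_one : tpowM k (1 : Matrix (Fin n) (Fin n) ℝ) = 1 := by
  simpa using tpowM_diagonal k (1 : Fin n → ℝ)

lemma tpowM_neg (g : Matrix (Fin n) (Fin n) ℝ) :
    tpowM k (-g) = (-1 : ℝ) ^ k • tpowM k g := by
  ext I J
  simp [tpowM, Finset.prod_neg]

end TensorPower

lemma exists_notMem_range_of_add_lt {n k l : ℕ} (I : Fin l → Fin n) (J : Fin k → Fin n)
    (h : l + k < n) : ∃ p, (∀ r, I r ≠ p) ∧ ∀ r, J r ≠ p := by
  have hcard : (Finset.univ.image I ∪ Finset.univ.image J).card <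
      (Finset.univ : Finset (Fin n)).card := by
    calc _ ≤ (Finset.univ.image I).card + (Finset.univ.image J).card := Finset.card_union_le _ _
      _ ≤ l + k := add_le_add (Finset.card_image_le.trans_eq (by simp))
          (Finset.card_image_le.trans_eq (by simp))
      _ < _ := by simpa using h
  obtain ⟨p, -, hp⟩ := Finset.exists_mem_notMem_of_card_lt_card hcard
  simp only [Finset.mem_union, Finset.mem_image, Finset.mem_univ, true_and, not_or,
    not_exists] at hp
  exact ⟨p, hp⟩

def Intertwines {n k l : ℕ} (M : Matrix (Fin l → Fin n) (Fin k → Fin n) ℝ)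
    (g : Matrix (Fin n) (Fin n) ℝ) : Prop :=
  M * tpowM k g = tpowM l g * M

lemma isGEquiv_iff_intertwines {n k l : ℕ} (P : Matrix (Fin n) (Fin n) ℝ → Prop)
    (φ : ((Fin k → Fin n) → ℝ) →ₗ[ℝ] ((Fin l → Fin n) → ℝ)) :
    IsGEquiv k l P φ ↔ ∀ g, P g → Intertwines (LinearMap.toMatrix' φ) g := by
  refine forall₂_congr fun g _ => ?_
  conv_lhs => rw [← Matrix.toLin'_toMatrix' φ]
  simp only [← Matrix.toLin'_apply', ← Matrix.toLin'_mul]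
  exact Matrix.toLin'.injective.eq_iff

namespace Intertwines

variable {n k l : ℕ} {M : Matrix (Fin l → Fin n) (Fin k → Fin n) ℝ}

lemma mul {g h : Matrix (Fin n) (Fin n) ℝ} (hg : Intertwines M g) (hh : Intertwines M h) :
    Intertwines M (g * h) := by
  rw [Intertwines, tpowM_mul, tpowM_mul, ← Matrix.mul_assoc, hg, Matrix.mul_assoc, hh,
    Matrix.mul_assoc]

lemma neg_one (h : Even (l + k)) : Intertwines M (-1) := by
  rw [Intertwines, tpowM_neg, tpowM_neg, tpowM_one, tpowM_one,
    neg_one_pow_congr (Nat.even_add.mp h)]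
  simp

end Intertwines

section Orthogonal

variable {ι R : Type*} [Fintype ι] [DecidableEq ι] [CommRing R]

lemma transpose_mul_self_mul {a b : Matrix ι ι R} (ha : aᵀ * a = 1) (hb : bᵀ * b = 1) :
    (a * b)ᵀ * (a * b) = 1 := by
  rw [transpose_mul, Matrix.mul_assoc, ← Matrix.mul_assoc aᵀ, ha, Matrix.one_mul, hb]

lemma det_eq_one_or_neg_one_of_transpose_mul_self [NoZeroDivisors R] {g : Matrix ι ι R}
    (hg : gᵀ * g = 1) : g.det = 1 ∨ g.det = -1 :=
  mul_self_eq_one_iff.mp <| by simpa [det_transpose] using congrArg det hg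

end Orthogonal

def coordReflection {n : ℕ} (m : Fin n) : Matrix (Fin n) (Fin n) ℝ :=
  diagonal fun i => if i = m then -1 else 1

lemma coordReflection_transpose_mul_self {n : ℕ} (m : Fin n) :
    (coordReflection m)ᵀ * coordReflection m = 1 := by
  rw [coordReflection, diagonal_transpose, diagonal_mul_diagonal, ← diagonal_one]
  congr 1
  ext i
  split_ifs <;> norm_num

lemma det_coordReflection {n : ℕ} (m : Fin n) : (coordReflection m).det = -1 := by
  simp [coordReflection, det_diagonal, Finset.prod_ite_eq']

section

variable {n k l : ℕ} {M : Matrix (Fin l → Fin n) (Fin k → Fin n) ℝ}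

theorem intertwines_of_transpose_mul_self_of_det_eq_neg_one {r : Matrix (Fin n) (Fin n) ℝ}
    (hSO : ∀ g, gᵀ * g = 1 ∧ g.det = 1 → Intertwines M g)
    (hr : rᵀ * r = 1) (hr_det : r.det = -1) (hMr : Intertwines M r) :
    ∀ g, gᵀ * g = 1 → Intertwines M g := by
  intro g hg
  rcases det_eq_one_or_neg_one_of_transpose_mul_self hg with hdet | hdet
  · exact hSO g ⟨hg, hdet⟩
  have hr' : r * rᵀ = 1 := mul_eq_one_comm.mp hr
  have hrg : (rᵀ * g)ᵀ * (rᵀ * g) = 1 ∧ (rᵀ * g).det = 1 := by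
    refine ⟨transpose_mul_self_mul (by rwa [transpose_transpose]) hg, ?_⟩
    rw [det_mul, det_transpose, hr_det, hdet]
    norm_num
  simpa [← Matrix.mul_assoc, hr'] using hMr.mul (hSO _ hrg)

theorem intertwines_coordReflection (h : l + k < n)
    (hSO : ∀ g, gᵀ * g = 1 ∧ g.det = 1 → Intertwines M g) (m : Fin n) :
    Intertwines M (coordReflection m) := by
  rw [Intertwines, coordReflection, tpowM_diagonal, tpowM_diagonal]
  ext I J
  rw [mul_diagonal, diagonal_mul]
  obtain ⟨p, hpI, hpJ⟩ := exists_notMem_range_of_add_lt I J h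
  have hmp := congr_fun₂ (hSO (coordReflection m * coordReflection p) ⟨?_, ?_⟩) I J
  · rw [coordReflection, coordReflection, diagonal_mul_diagonal, tpowM_diagonal,
      tpowM_diagonal, mul_diagonal, diagonal_mul] at hmp
    simpa [Finset.prod_mul_distrib, hpI, hpJ] using hmp
  · exact transpose_mul_self_mul (coordReflection_transpose_mul_self m)
      (coordReflection_transpose_mul_self p)
  · rw [det_mul, det_coordReflection, det_coordReflection]
    norm_num

end

theorem stmt8_general (n k l : ℕ)
    (h : l + k < n ∨ (Odd n ∧ Even (l + k)))
    (φ : ((Fin k → Fin n) → ℝ) →ₗ[ℝ] ((Fin l → Fin n) → ℝ)) :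
    IsGEquiv k l (fun g => gᵀ * g = 1 ∧ g.det = 1) φ ↔
      IsGEquiv k l (fun g => gᵀ * g = 1) φ := by
  simp only [isGEquiv_iff_intertwines]
  refine ⟨fun hSO => ?_, fun hO g hg => hO g hg.1⟩
  rcases h with hlt | ⟨hodd, heven⟩
  · let m : Fin n := ⟨0, by omega⟩
    exact intertwines_of_transpose_mul_self_of_det_eq_neg_one hSO
      (coordReflection_transpose_mul_self m) (det_coordReflection m)
      (intertwines_coordReflection hlt hSO m)
  · refine intertwines_of_transpose_mul_self_of_det_eq_neg_one hSO (by simp) ?_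
      (Intertwines.neg_one heven)
    rw [det_neg, det_one, Fintype.card_fin, hodd.neg_one_pow, mul_one]

/-- Suppose either `n > l + k`, or `n` is odd and `l + k` is even.  Then a linear
map `(ℝⁿ)^{⊗k} → (ℝⁿ)^{⊗l}` is `SO(n)`-equivariant iff it is `O(n)`-equivariant. -/
theorem stmt8 (n k l : ℕ) (hn : 1 ≤ n)
    (h : l + k < n ∨ (Odd n ∧ Even (l + k)))
    (φ : ((Fin k → Fin n) → ℝ) →ₗ[ℝ] ((Fin l → Fin n) → ℝ)) :
    IsGEquiv k l (fun g => gᵀ * g = 1 ∧ g.det = 1) φ ↔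
      IsGEquiv k l (fun g => gᵀ * g = 1) φ :=
  stmt8_general n k l h φ
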